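/- Let n, δ_{i-1}, δ_i, δ_{i+1}, v_{i-1}, v_i, v_{i+1} be natural numbers with all δ's positive, satisfying 2·δ_i = δ_{i-1} + δ_{i+1}, 2·v_i ≤ v_{i-1} + v_{i+1}, δ_{i-1}·v_i > δ_i·v_{i-1}, and v_i > n·δ_i. Then v_{i+1} > n·δ_{i+1}. -/
import Mathlib


/-- Second part of Lemma A.3(2): pushing the strict bound v > nδ along a bivalent vertex. -/
theorem push_strict_bound (n δim1 δi δip1 vim1 vi vip1 : ℕ)
    (hδim1 : 0 < δim1) (hδi : 0 < δi) (hδip1 : 0 < δip1)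
    (hδ : 2 * δi = δim1 + δip1) (hv : 2 * vi ≤ vim1 + vip1)
    (h : δim1 * vi > δi * vim1) (hvi : vi > n * δi) : vip1 > n * δip1 := by
  have key : δi * vip1 > δip1 * vi := by nlinarith
  have : δi * vip1 > δi * (n * δip1) := by nlinarith
  exact lt_of_mul_lt_mul_left this (Nat.zero_le _)
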